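/- arXiv:1611.07189 — 2 statements merged into one kernel-verified Lean document; each statement's English description precedes it below -/
import Mathlib

section
/- Let λ ≥ 0 and μ > 0 be real constants and let (a^{αβ})_{α,β∈{1,2}} be a symmetric positive definite 2×2 matrix. Define the fourth-order tensor a^{αβστ} := (4λμ/(λ+2μ)) a^{αβ} a^{στ} + 2μ (a^{ασ}a^{βτ} + a^{ατ}a^{βσ}). Then there exists a constant c > 0 such that for every symmetric 2×2 matrix t = (t_{αβ}), one has Σ_{α,β} |t_{αβ}|² ≤ c · a^{αβστ} t_{στ} t_{αβ} (summation over repeated Greek indices in {1,2}). -/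
lemma traceBW (B00 B01 B11 W00 W01 W11 : ℝ) (hB0 : 0 ≤ B00) (hB1 : 0 ≤ B11)
    (hB : B01^2 ≤ B00*B11) (hW0 : 0 ≤ W00) (hW1 : 0 ≤ W11) (hW : W01^2 ≤ W00*W11) :
    0 ≤ B00*W00 + 2*B01*W01 + B11*W11 := by
  nlinarith [sq_nonneg (B00*W01 + B01*W00), sq_nonneg (B11*W01 + B01*W11),
    mul_nonneg hB0 hW0, mul_nonneg hB1 hW1, mul_nonneg (mul_nonneg hB0 hW0) (mul_nonneg hB1 hW1),
    sq_nonneg (B00*W00 - B11*W11), sq_nonneg B01, sq_nonneg W01]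

set_option maxHeartbeats 1000000 in
lemma key (p q r x y z : ℝ) (hp : 0 < p) (hr : 0 < r) (hD : 0 < p*r - q*q) :
    (x^2+2*y^2+z^2)*(p*r-q*q)^2 ≤
      (p+r)^2*((p*x+q*y)^2+(q*y+r*z)^2+2*(p*y+q*z)*(q*x+r*y)) := by
  set M00 := p*x+q*y; set M01 := p*y+q*z; set M10 := q*x+r*y; set M11 := q*y+r*z
  have hA : (0:ℝ) ≤ M00^2+M01^2+M10^2+M11^2 := by positivity
  have hW0 : 0 ≤ x*M00+y*M10 := by
    have : p*(x*M00+y*M10) = (p*x+q*y)^2 + (p*r-q*q)*y^2 := by simp only [M00, M10]; ring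
    nlinarith [sq_nonneg (p*x+q*y), sq_nonneg y]
  have hW1 : 0 ≤ y*M01+z*M11 := by
    have : p*(y*M01+z*M11) = (p*y+q*z)^2 + (p*r-q*q)*z^2 := by simp only [M01, M11]; ring
    nlinarith [sq_nonneg (p*y+q*z), sq_nonneg z]
  have hW : (x*M01+y*M11)^2 ≤ (x*M00+y*M10)*(y*M01+z*M11) := by
    have : (x*M00+y*M10)*(y*M01+z*M11) - (x*M01+y*M11)^2 = (p*r-q*q)*(x*z-y*y)^2 := by
      simp only [M00, M01, M10, M11]; ring
    nlinarith [sq_nonneg (x*z-y*y)]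
  have hB : (q*(p+r))^2 ≤ (p*p+q*q)*(q*q+r*r) := by nlinarith [sq_nonneg (p*r-q*q), sq_nonneg (p-r), sq_nonneg q]
  have hH := traceBW (p*p+q*q) (q*(p+r)) (q*q+r*r) (x*M00+y*M10) (x*M01+y*M11) (y*M01+z*M11)
    (by nlinarith [sq_nonneg p, sq_nonneg q]) (by nlinarith [sq_nonneg r, sq_nonneg q]) hB hW0 hW1 hW
  have hid : (p+r)^2*(M00^2+M11^2+2*M01*M10)
      = (x^2+2*y^2+z^2)*(p*r-q*q)^2 + (p*r-q*q)*(M00^2+M01^2+M10^2+M11^2)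
        + (p+r)*((p*p+q*q)*(x*M00+y*M10) + 2*(q*(p+r))*(x*M01+y*M11) + (q*q+r*r)*(y*M01+z*M11)) := by
    simp only [M00, M01, M10, M11]; ring
  nlinarith [mul_nonneg hD.le hA, mul_nonneg (by linarith : (0:ℝ) ≤ p+r) hH]

set_option maxHeartbeats 4000000 in
/-- Uniform positive definiteness of the two-dimensional shell elasticity tensor
`a^{αβστ} = (4λμ/(λ+2μ)) a^{αβ}a^{στ} + 2μ(a^{ασ}a^{βτ} + a^{ατ}a^{βσ})` on symmetric
2×2 matrices, when `(a^{αβ})` is symmetric positive definite, `λ ≥ 0`, `μ > 0`. -/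
theorem stmt_4 (lam mu : ℝ) (hlam : 0 ≤ lam) (hmu : 0 < mu)
    (a : Matrix (Fin 2) (Fin 2) ℝ) (ha_symm : a.IsSymm) (ha_pd : a.PosDef) :
    ∃ c > 0, ∀ t : Matrix (Fin 2) (Fin 2) ℝ, t.IsSymm →
      ∑ α, ∑ β, (t α β) ^ 2 ≤
        c * ∑ α, ∑ β, ∑ σ, ∑ τ,
          ((4 * lam * mu / (lam + 2 * mu)) * a α β * a σ τ
            + 2 * mu * (a α σ * a β τ + a α τ * a β σ)) * t σ τ * t α β := by
  set p := a 0 0 with hp'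
  set q := a 0 1 with hq'
  set r := a 1 1 with hr'
  have ha10 : a 1 0 = q := by
    have := congrFun (congrFun ha_symm 1) 0
    simpa [Matrix.transpose_apply] using this.symm
  have hD : 0 < p*r - q*q := by
    have := ha_pd.det_pos
    rw [Matrix.det_fin_two] at this
    rw [ha10] at this
    linarith
  have hp : 0 < p := by
    have h := ha_pd.dotProduct_mulVec_pos (x := ![1, 0]) (fun h => by simpa using congrFun h 0)
    simpa [Matrix.mulVec, dotProduct, Fin.sum_univ_two] using h
  have hr : 0 < r := by nlinarith [sq_nonneg q]
  have hk : 0 ≤ 4 * lam * mu / (lam + 2 * mu) := by positivity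
  refine ⟨(p+r)^2 / (4*mu*(p*r-q*q)^2), by positivity, ?_⟩
  intro t ht
  have ht10 : t 1 0 = t 0 1 := by
    have := congrFun (congrFun ht 1) 0
    simpa [Matrix.transpose_apply] using this.symm
  set x := t 0 0; set y := t 0 1; set z := t 1 1
  set k := 4 * lam * mu / (lam + 2 * mu) with hk'
  have hE := key p q r x y z hp hr hD
  set E := (p*x+q*y)^2+(q*y+r*z)^2+2*(p*y+q*z)*(q*x+r*y) with hE'
  have hpr2 : 0 < (p+r)^2 := by positivity
  have hS0 : 0 ≤ (x^2+2*y^2+z^2)*(p*r-q*q)^2 := by positivity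
  have hEnonneg : 0 ≤ E := by nlinarith [hE, hS0, hpr2]
  have hsumL : ∑ α, ∑ β, (t α β) ^ 2 = x^2 + 2*y^2 + z^2 := by
    simp [Fin.sum_univ_two, ht10]; ring
  have hsumR : (∑ α, ∑ β, ∑ σ, ∑ τ,
          (k * a α β * a σ τ + 2 * mu * (a α σ * a β τ + a α τ * a β σ)) * t σ τ * t α β)
      = k * (p*x + 2*q*y + r*z)^2 + 4*mu*E := by
    simp [Fin.sum_univ_two, ht10, ha10, hE']
    ring
  rw [hsumL, hsumR]
  have hc4 : (p+r)^2 / (4*mu*(p*r-q*q)^2) * (4*mu*E) = (p+r)^2*E/(p*r-q*q)^2 := by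
    field_simp
  have h1 : x^2+2*y^2+z^2 ≤ (p+r)^2 / (4*mu*(p*r-q*q)^2) * (4*mu*E) := by
    rw [hc4, le_div_iff₀ (by positivity)]
    linarith
  have h2 : (p+r)^2 / (4*mu*(p*r-q*q)^2) * (4*mu*E)
      ≤ (p+r)^2 / (4*mu*(p*r-q*q)^2) * (k * (p*x + 2*q*y + r*z)^2 + 4*mu*E) := by
    apply mul_le_mul_of_nonneg_left _ (by positivity)
    nlinarith [mul_nonneg hk (sq_nonneg (p*x + 2*q*y + r*z))]
  linarith
end

section
/- Let λ ≥ 0 and μ > 0 and let (g^{ij})_{i,j∈{1,2,3}} be a symmetric positive definite 3×3 matrix. Define A^{ijkl} := λ g^{ij} g^{kl} + μ (g^{ik} g^{jl} + g^{il} g^{jk}). Then there exists a constant C > 0 such that Σ_{i,j} |t_{ij}|² ≤ C · A^{ijkl} t_{kl} t_{ij} for all symmetric 3×3 matrices t = (t_{ij}). -/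
private lemma cs3 (a b c x y z : ℝ) :
    (a*x+b*y+c*z)^2 ≤ (a^2+b^2+c^2)*(x^2+y^2+z^2) := by
  nlinarith [sq_nonneg (a*y-b*x), sq_nonneg (a*z-c*x), sq_nonneg (b*z-c*y)]

private lemma frob_submult (A B : Matrix (Fin 3) (Fin 3) ℝ) :
    ∑ i, ∑ j, ((A*B) i j)^2 ≤ (∑ i, ∑ j, (A i j)^2) * (∑ i, ∑ j, (B i j)^2) := by
  have h : ∀ i j : Fin 3, ((A*B) i j)^2 ≤ (∑ k, (A i k)^2) * (∑ k, (B k j)^2) := by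
    intro i j
    simp only [Matrix.mul_apply, Fin.sum_univ_three]
    exact cs3 _ _ _ _ _ _
  calc ∑ i, ∑ j, ((A*B) i j)^2
      ≤ ∑ i, ∑ j, (∑ k, (A i k)^2) * (∑ k, (B k j)^2) := by
        apply Finset.sum_le_sum; intro i _
        apply Finset.sum_le_sum; intro j _
        exact h i j
    _ = (∑ i, ∑ j, (A i j)^2) * (∑ i, ∑ j, (B i j)^2) := by
        simp only [Fin.sum_univ_three]; ring

private lemma big_identity (lam mu : ℝ) (r t : Matrix (Fin 3) (Fin 3) ℝ)
    (hr : r.IsSymm) (ht : t.IsSymm) :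
    ∑ i, ∑ j, ∑ k, ∑ l,
      (lam * (r*r) i j * (r*r) k l + mu * ((r*r) i k * (r*r) j l + (r*r) i l * (r*r) j k)) * t k l * t i j
    = lam * (∑ i, ∑ j, (r*r) i j * t i j)^2 + 2 * mu * ∑ i, ∑ j, ((r*t*r) i j)^2 := by
  have t10 : t 1 0 = t 0 1 := ht.apply 0 1
  have t20 : t 2 0 = t 0 2 := ht.apply 0 2
  have t21 : t 2 1 = t 1 2 := ht.apply 1 2
  have r10 : r 1 0 = r 0 1 := hr.apply 0 1
  have r20 : r 2 0 = r 0 2 := hr.apply 0 2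
  have r21 : r 2 1 = r 1 2 := hr.apply 1 2
  simp only [Matrix.mul_apply, Fin.sum_univ_three, t10, t20, t21, r10, r20, r21]
  ring

/-- Uniform positive definiteness of the three-dimensional elasticity tensor
`A^{ijkl} = λ g^{ij}g^{kl} + μ(g^{ik}g^{jl} + g^{il}g^{jk})` on symmetric 3×3 matrices,
when `(g^{ij})` is symmetric positive definite, `λ ≥ 0`, `μ > 0`. -/
theorem stmt_5 (lam mu : ℝ) (hlam : 0 ≤ lam) (hmu : 0 < mu)
    (g : Matrix (Fin 3) (Fin 3) ℝ) (hg_symm : g.IsSymm) (hg_pd : g.PosDef) :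
    ∃ C > 0, ∀ t : Matrix (Fin 3) (Fin 3) ℝ, t.IsSymm →
      ∑ i, ∑ j, (t i j) ^ 2 ≤
        C * ∑ i, ∑ j, ∑ k, ∑ l,
          (lam * g i j * g k l + mu * (g i k * g j l + g i l * g j k)) * t k l * t i j := by
  open scoped MatrixOrder in
  set r := CFC.sqrt g with hr_def
  open scoped MatrixOrder in
  have hrr : r * r = g := CFC.sqrt_mul_sqrt_self g hg_pd.posSemidef.nonneg
  open scoped MatrixOrder in
  have hrherm : r.IsHermitian := (Matrix.nonneg_iff_posSemidef.mp (CFC.sqrt_nonneg g)).1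
  have hrsymm : r.IsSymm := by
    have h := hrherm
    rwa [Matrix.IsHermitian, Matrix.conjTranspose_eq_transpose_of_trivial] at h
  have hdet : IsUnit r.det := by
    have hgdet : 0 < g.det := hg_pd.det_pos
    have : r.det * r.det = g.det := by rw [← Matrix.det_mul, hrr]
    have hne : r.det ≠ 0 := by
      intro h; rw [h, mul_zero] at this; exact (ne_of_gt hgdet) this.symm
    exact isUnit_iff_ne_zero.mpr hne
  set s := r⁻¹ with hs_def
  have hsr : s * r = 1 := Matrix.nonsing_inv_mul r hdet
  have hrs : r * s = 1 := Matrix.mul_nonsing_inv r hdet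
  have hFpos : 0 < ∑ i, ∑ j, (s i j)^2 := by
    by_contra h
    push_neg at h
    have hall : ∀ i j : Fin 3, s i j = 0 := by
      intro i j
      have hz : ∑ i, ∑ j, (s i j)^2 = 0 := le_antisymm h (by positivity)
      have h1 : ∀ i ∈ Finset.univ, ∑ j, (s i j)^2 = 0 := by
        intro i _
        exact (Finset.sum_eq_zero_iff_of_nonneg (fun i _ => by positivity)).mp hz i (Finset.mem_univ i)
      have h2 := (Finset.sum_eq_zero_iff_of_nonneg (fun j _ => by positivity)).mp
        (h1 i (Finset.mem_univ i)) j (Finset.mem_univ j)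
      exact pow_eq_zero_iff (n := 2) (by norm_num) |>.mp h2
    have : s = 0 := by ext i j; exact hall i j
    rw [this, Matrix.zero_mul] at hsr
    exact one_ne_zero (congrFun (congrFun hsr.symm 0) 0)
  set F := ∑ i, ∑ j, (s i j)^2 with hF_def
  refine ⟨F * F / (2 * mu), by positivity, ?_⟩
  intro t ht
  set K := ∑ i, ∑ j, ((r*t*r) i j)^2 with hK_def
  have hident :
      ∑ i, ∑ j, ∑ k, ∑ l,
        (lam * g i j * g k l + mu * (g i k * g j l + g i l * g j k)) * t k l * t i j
      = lam * (∑ i, ∑ j, g i j * t i j)^2 + 2 * mu * K := by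
    rw [← hrr]; exact big_identity lam mu r t hrsymm ht
  have hteq : t = s * ((r*t*r) * s) := by
    have : s * ((r*t*r) * s) = (s*r) * t * (r*s) := by noncomm_ring
    rw [this, hsr, hrs, Matrix.one_mul, Matrix.mul_one]
  have hb1 : ∑ i, ∑ j, (t i j)^2 ≤ F * (∑ i, ∑ j, (((r*t*r) * s) i j)^2) := by
    conv_lhs => rw [hteq]
    exact frob_submult s ((r*t*r) * s)
  have hb2 : ∑ i, ∑ j, (((r*t*r) * s) i j)^2 ≤ K * F :=
    frob_submult (r*t*r) s
  have hbt : ∑ i, ∑ j, (t i j)^2 ≤ F * (K * F) :=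
    le_trans hb1 (by nlinarith [hFpos])
  rw [hident]
  have hKnn : 0 ≤ K := by positivity
  have hSnn : 0 ≤ lam * (∑ i, ∑ j, g i j * t i j)^2 := by positivity
  have h2mu : (0:ℝ) < 2 * mu := by linarith
  rw [div_mul_eq_mul_div, le_div_iff₀ h2mu]
  nlinarith [hbt, hSnn, hFpos, hmu, mul_nonneg (mul_nonneg hFpos.le hFpos.le) hSnn]
end
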